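/- arXiv:2505.15387 — 13 statements merged into one kernel-verified Lean document; each statement's English description precedes it below -/
import Mathlib

section
/- Let (D,⊢,⊣) be a g-digroup. Then (D,⊢) is a right group, i.e. for all a, b ∈ D there is a unique x ∈ D with a ⊢ x = b, and (D,⊣) is a left group, i.e. for all a, b ∈ D there is a unique y ∈ D with y ⊣ a = b. -/
/-- An element `e` is a *bar-unit* for the pair of operations `(⊢, ⊣)` if
`e ⊢ a = a = a ⊣ e` for all `a`. -/
def IsBarUnit {D : Type*} (vd dv : D → D → D) (e : D) : Prop :=
  ∀ a : D, vd e a = a ∧ dv a e = a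

/-- A generalized digroup (g-digroup): two associative operations `vd` (`⊢`) and `dv` (`⊣`)
satisfying inner associativity and the two bar-side irrelevance laws, admitting at least one
bar-unit, and such that for every element `a` and every bar-unit `e` there is a unique pair
`(I e a, J e a)` with `(I e a) ⊣ a = e = a ⊢ (J e a)`. -/
structure GDigroup (D : Type*) where
  vd : D → D → D
  dv : D → D → D
  vd_assoc : ∀ a b c : D, vd (vd a b) c = vd a (vd b c)
  dv_assoc : ∀ a b c : D, dv (dv a b) c = dv a (dv b c)
  inner_assoc : ∀ a b c : D, dv (vd a b) c = vd a (dv b c)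
  bar_right : ∀ a b c : D, dv a (vd b c) = dv a (dv b c)
  bar_left : ∀ a b c : D, vd (vd a b) c = vd (dv a b) c
  exists_barUnit : ∃ e : D, IsBarUnit vd dv e
  I : D → D → D
  J : D → D → D
  I_spec : ∀ e a : D, IsBarUnit vd dv e → dv (I e a) a = e
  J_spec : ∀ e a : D, IsBarUnit vd dv e → vd a (J e a) = e
  I_unique : ∀ e a x : D, IsBarUnit vd dv e → dv x a = e → x = I e a
  J_unique : ∀ e a y : D, IsBarUnit vd dv e → vd a y = e → y = J e a


/-! Fix a bar-unit `e`. Left multiplication `a ⊢ ·` has right inverse `J_e a ⊢ ·` and, since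
`(I_e a ⊢ a) ⊢ x = (I_e a ⊣ a) ⊢ x = e ⊢ x`, also left inverse `I_e a ⊢ ·`; so it is bijective.
Dually `· ⊣ a` is bijective, with inverses `· ⊣ I_e a` and `· ⊣ J_e a`. -/

namespace GDigroup

variable {D : Type*} (S : GDigroup D) {e : D}

theorem vd_I_vd (he : IsBarUnit S.vd S.dv e) (a x : D) : S.vd (S.I e a) (S.vd a x) = x := by
  rw [← S.vd_assoc, S.bar_left, S.I_spec e a he, (he x).1]

theorem vd_vd_J (he : IsBarUnit S.vd S.dv e) (a x : D) : S.vd a (S.vd (S.J e a) x) = x := by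
  rw [← S.vd_assoc, S.J_spec e a he, (he x).1]

theorem dv_dv_J (he : IsBarUnit S.vd S.dv e) (a y : D) : S.dv (S.dv y a) (S.J e a) = y := by
  rw [S.dv_assoc, ← S.bar_right, S.J_spec e a he, (he y).2]

theorem dv_I_dv (he : IsBarUnit S.vd S.dv e) (a y : D) : S.dv (S.dv y (S.I e a)) a = y := by
  rw [S.dv_assoc, S.I_spec e a he, (he y).2]

theorem vd_left_bijective (a : D) : Function.Bijective (S.vd a) := by
  obtain ⟨e, he⟩ := S.exists_barUnit
  exact ⟨Function.LeftInverse.injective (S.vd_I_vd he a),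
    Function.RightInverse.surjective (S.vd_vd_J he a)⟩

theorem dv_right_bijective (a : D) : Function.Bijective (S.dv · a) := by
  obtain ⟨e, he⟩ := S.exists_barUnit
  exact ⟨Function.LeftInverse.injective (g := (S.dv · (S.J e a))) (S.dv_dv_J he a),
    Function.RightInverse.surjective (g := (S.dv · (S.I e a))) (S.dv_I_dv he a)⟩

end GDigroup

/-- If `(D, ⊢, ⊣)` is a g-digroup, then `(D, ⊢)` is a right group
(for all `a b` there is a unique `x` with `a ⊢ x = b`) and `(D, ⊣)` is a left group
(for all `a b` there is a unique `y` with `y ⊣ a = b`). -/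
theorem gdigroup_right_group_left_group {D : Type*} (S : GDigroup D) :
    (∀ a b : D, ∃! x : D, S.vd a x = b) ∧ (∀ a b : D, ∃! y : D, S.dv y a = b) :=
  ⟨fun a => (S.vd_left_bijective a).existsUnique,
    fun a => (S.dv_right_bijective a).existsUnique⟩
end

section
/- Let (D,⊢,⊣) be a g-digroup. Then the bar-units are exactly the idempotents of each operation: {e ∈ D : e ⊢ e = e} = E(D) = {e ∈ D : e ⊣ e = e}. -/
/-!
If `e ⊢ e = e` and `e₀` is a bar-unit, writing `e₀ = e ⊢ J` gives `e ⊢ e₀ = e₀`. Hence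
`e ⊢ a = (e ⊢ e₀) ⊢ a = a`, and `a ⊣ e = a ⊣ (e ⊣ e₀) = a ⊣ (e ⊢ e₀) = a`. Idempotents of `⊣`
are handled symmetrically, writing `e₀ = I ⊣ e` to get `e₀ ⊣ e = e₀`.
-/

namespace GDigroup

variable {D : Type*} (S : GDigroup D) {e e₀ : D}

theorem vd_eq_right_of_vd_self (he₀ : IsBarUnit S.vd S.dv e₀) (hee : S.vd e e = e) :
    S.vd e e₀ = e₀ := by
  have hJ : S.vd e (S.J e₀ e) = e₀ := S.J_spec e₀ e he₀
  calc S.vd e e₀ = S.vd (S.vd e e) (S.J e₀ e) := by rw [S.vd_assoc, hJ]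
    _ = e₀ := by rw [hee, hJ]

theorem dv_eq_left_of_dv_self (he₀ : IsBarUnit S.vd S.dv e₀) (hee : S.dv e e = e) :
    S.dv e₀ e = e₀ := by
  have hI : S.dv (S.I e₀ e) e = e₀ := S.I_spec e₀ e he₀
  calc S.dv e₀ e = S.dv (S.I e₀ e) (S.dv e e) := by rw [← S.dv_assoc, hI]
    _ = e₀ := by rw [hee, hI]

theorem isBarUnit_of_vd_eq_right (he₀ : IsBarUnit S.vd S.dv e₀) (h : S.vd e e₀ = e₀) :
    IsBarUnit S.vd S.dv e := fun a =>
  ⟨calc S.vd e a = S.vd (S.vd e e₀) a := by rw [S.vd_assoc, (he₀ a).1]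
      _ = a := by rw [h, (he₀ a).1],
    calc S.dv a e = S.dv a (S.vd e e₀) := by rw [S.bar_right, (he₀ e).2]
      _ = a := by rw [h, (he₀ a).2]⟩

theorem isBarUnit_of_dv_eq_left (he₀ : IsBarUnit S.vd S.dv e₀) (h : S.dv e₀ e = e₀) :
    IsBarUnit S.vd S.dv e := fun a =>
  ⟨calc S.vd e a = S.vd (S.dv e₀ e) a := by rw [← S.bar_left, (he₀ e).1]
      _ = a := by rw [h, (he₀ a).1],
    calc S.dv a e = S.dv a (S.dv e₀ e) := by rw [← S.dv_assoc, (he₀ a).2]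
      _ = a := by rw [h, (he₀ a).2]⟩

end GDigroup

/-- In a g-digroup the bar-units are exactly the idempotents of each of the
two operations: `{e | e ⊢ e = e} = E(D) = {e | e ⊣ e = e}`. -/
theorem gdigroup_barUnits_eq_idempotents {D : Type*} (S : GDigroup D) :
    (∀ e : D, S.vd e e = e ↔ IsBarUnit S.vd S.dv e) ∧
    (∀ e : D, S.dv e e = e ↔ IsBarUnit S.vd S.dv e) := by
  obtain ⟨e₀, he₀⟩ := S.exists_barUnit
  refine ⟨fun e => ⟨fun hee => ?_, fun he => (he e).1⟩,
    fun e => ⟨fun hee => ?_, fun he => (he e).2⟩⟩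
  · exact S.isBarUnit_of_vd_eq_right he₀ (S.vd_eq_right_of_vd_self he₀ hee)
  · exact S.isBarUnit_of_dv_eq_left he₀ (S.dv_eq_left_of_dv_self he₀ hee)
end

section
/- Let (D,r) be a bijective left non-degenerate set-theoretic solution of the Yang–Baxter equation and define its square map 𝔮 : D → D by 𝔮(a) = λ_a^{-1}(a). Then r is right non-degenerate if and only if 𝔮 is bijective. -/
/-- The map `r × id` acting on `D × D × D`. -/
def rFst {D : Type*} (r : D × D → D × D) : D × D × D → D × D × D :=
  fun p => ((r (p.1, p.2.1)).1, ((r (p.1, p.2.1)).2, p.2.2))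

/-- The map `id × r` acting on `D × D × D`. -/
def rSnd {D : Type*} (r : D × D → D × D) : D × D × D → D × D × D :=
  fun p => (p.1, r p.2)

/-- `r` is a set-theoretic solution of the Yang--Baxter equation. -/
def IsYBE {D : Type*} (r : D × D → D × D) : Prop :=
  rFst r ∘ rSnd r ∘ rFst r = rSnd r ∘ rFst r ∘ rSnd r

/-!
Write `r (a, b) = (λ_a b, ρ_b a)` and `q a = λ_a⁻¹ a`. Two components of the Yang–Baxter
equation give `q (λ_a t) = λ_{ρ_t a} (q t)` and `q ∘ ρ_c = ψ_c ∘ q` with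
`ψ_c a = ρ_{λ_a⁻¹ c} a`, and `ψ_c` is bijective because `r` is. The second identity makes `ρ_c`
conjugate to `ψ_c` when `q` is bijective. Conversely, if every `ρ_t` is bijective, the first
identity at `a = ρ_t⁻¹ t` shows that `t ↦ λ_{ρ_t⁻¹ t} t` is a right inverse of `q`; this map is
the square map of the solution `r̃ = τ ∘ r⁻¹ ∘ τ` (`τ` the flip), and the first identity for `r̃`
shows that it is surjective, so `q` is bijective.
-/

open Function Equiv

section

variable {D : Type*}

def squareMap (lam : D → Perm D) (a : D) : D := (lam a).symm a

theorem rFst_injective {r : D × D → D × D} (hr : Injective r) : Injective (rFst r) := by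
  rintro ⟨a, b, c⟩ ⟨a', b', c'⟩ h
  simp only [rFst, Prod.mk.injEq] at h
  obtain ⟨h1, h2, rfl⟩ := h
  obtain ⟨rfl, rfl⟩ := Prod.mk.inj (hr (Prod.ext h1 h2))
  rfl

theorem rSnd_injective {r : D × D → D × D} (hr : Injective r) : Injective (rSnd r) :=
  Injective.prodMap injective_id hr

theorem bijective_rho_lam_symm {r : D × D → D × D} (hbij : Bijective r) {lam : D → Perm D}
    (hlam : ∀ a b : D, (r (a, b)).1 = lam a b) (c : D) :
    Bijective (fun a : D => (r (a, (lam a).symm c)).2) := by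
  have hr : ∀ a, r (a, (lam a).symm c) = (c, (r (a, (lam a).symm c)).2) := fun a =>
    Prod.ext (by rw [hlam, Equiv.apply_symm_apply]) rfl
  refine ⟨fun a a' h => ?_, fun v => ?_⟩
  · exact congrArg Prod.fst <| hbij.injective <|
      (hr a).trans ((congrArg (Prod.mk c) h).trans (hr a').symm)
  · obtain ⟨⟨a, b⟩, hab⟩ := hbij.surjective (c, v)
    have hb : b = (lam a).symm c := by rw [Equiv.eq_symm_apply, ← hlam, hab]
    refine ⟨a, ?_⟩
    dsimp only
    rw [← hb, hab]

namespace IsYBE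

theorem prodSwap_conj {r : D × D → D × D} (hYB : IsYBE r) :
    IsYBE (Prod.swap ∘ r ∘ Prod.swap) := by
  funext p
  have h := congrArg (fun x : D × D × D => (x.2.2, x.2.1, x.1))
    (congrFun hYB (p.2.2, p.2.1, p.1))
  simpa only [rFst, rSnd, comp_apply, Prod.swap] using h.symm

theorem symm {e : D × D ≃ D × D} (hYB : IsYBE e) : IsYBE e.symm := by
  have hinj : Injective (rFst e ∘ rSnd e ∘ rFst e) :=
    (rFst_injective e.injective).comp ((rSnd_injective e.injective).comp
      (rFst_injective e.injective))
  funext p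
  apply hinj
  conv_rhs => rw [hYB]
  simp [rFst, rSnd]

variable {r : D × D → D × D} (hYB : IsYBE r) {lam : D → Perm D}
  (hlam : ∀ a b : D, (r (a, b)).1 = lam a b)
include hYB hlam

theorem lam_lam_rho (a b c : D) :
    lam (lam a b) (lam (r (a, b)).2 c) = lam a (lam b c) := by
  simpa only [comp_apply, rFst, rSnd, hlam] using congrArg Prod.fst (congrFun hYB (a, b, c))

theorem rho_lam_lam (a b c : D) :
    (r (lam a b, lam (r (a, b)).2 c)).2 = lam (r (a, lam b c)).2 (r (b, c)).2 := by
  simpa only [comp_apply, rFst, rSnd, hlam] using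
    congrArg (fun p : D × D × D => p.2.1) (congrFun hYB (a, b, c))

theorem squareMap_lam_apply (a t : D) :
    squareMap lam (lam a t) = lam (r (a, t)).2 (squareMap lam t) := by
  rw [squareMap, Equiv.symm_apply_eq, squareMap, lam_lam_rho hYB hlam, Equiv.apply_symm_apply]

theorem lam_rho_squareMap (a : D) : lam (r (a, squareMap lam a)).2 = lam (squareMap lam a) := by
  ext x
  apply (lam a).injective
  have h := lam_lam_rho hYB hlam a (squareMap lam a) x
  rwa [squareMap, Equiv.apply_symm_apply] at h

theorem squareMap_rho_apply (a c : D) :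
    squareMap lam (r (a, c)).2 =
      (r (squareMap lam a, (lam (squareMap lam a)).symm c)).2 := by
  have h := rho_lam_lam hYB hlam a (squareMap lam a) ((lam (squareMap lam a)).symm c)
  have hq : lam a (squareMap lam a) = a := Equiv.apply_symm_apply _ _
  rw [lam_rho_squareMap hYB hlam, Equiv.apply_symm_apply, hq] at h
  rw [squareMap, Equiv.symm_apply_eq]
  exact h

theorem squareMap_surjective (hfix : ∀ t : D, ∃ a : D, (r (a, t)).2 = t) :
    Surjective (squareMap lam) := by
  intro t
  obtain ⟨a, ha⟩ := hfix t
  exact ⟨lam a t, by rw [squareMap_lam_apply hYB hlam, ha, squareMap, Equiv.apply_symm_apply]⟩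

theorem rho_bijective_of_squareMap_bijective (hbij : Bijective r)
    (hq : Bijective (squareMap lam)) (c : D) : Bijective (fun a : D => (r (a, c)).2) := by
  have hconj : squareMap lam ∘ (fun a => (r (a, c)).2) =
      (fun a => (r (a, (lam a).symm c)).2) ∘ squareMap lam :=
    funext fun a => squareMap_rho_apply hYB hlam a c
  rw [← hq.of_comp_iff', hconj]
  exact (bijective_rho_lam_symm hbij hlam c).comp hq

end IsYBE

section Transposed

variable {r : D × D → D × D} (hbij : Bijective r) {lam : D → Perm D}
  (hlam : ∀ a b : D, (r (a, b)).1 = lam a b)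
  (hρ : ∀ b : D, Bijective (fun a : D => (r (a, b)).2))

noncomputable def rhoPerm (b : D) : Perm D := Equiv.ofBijective _ (hρ b)

include hlam in
theorem apply_rhoPerm_symm (b t : D) : r ((rhoPerm hρ b).symm t, b) =
    (lam ((rhoPerm hρ b).symm t) b, t) :=
  Prod.ext (hlam _ _) ((rhoPerm hρ b).apply_symm_apply t)

noncomputable def transposed : D × D → D × D :=
  Prod.swap ∘ (Equiv.ofBijective r hbij).symm ∘ Prod.swap

include hlam in
noncomputable def transposedLam (t : D) : Perm D where
  toFun v := ((Equiv.ofBijective r hbij).symm (v, t)).2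
  invFun b := lam ((rhoPerm hρ b).symm t) b
  left_inv v := by
    dsimp only
    have hp : r ((Equiv.ofBijective r hbij).symm (v, t)) = (v, t) :=
      Equiv.ofBijective_apply_symm_apply r hbij _
    have ha : (rhoPerm hρ ((Equiv.ofBijective r hbij).symm (v, t)).2).symm t =
        ((Equiv.ofBijective r hbij).symm (v, t)).1 := by
      rw [Equiv.symm_apply_eq]
      exact (congrArg Prod.snd hp).symm
    rw [ha, ← hlam]
    exact congrArg Prod.fst hp
  right_inv b := by
    dsimp only
    rw [← apply_rhoPerm_symm hlam hρ b t, Equiv.ofBijective_symm_apply_apply]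

include hlam in
theorem transposed_fst (a b : D) :
    (transposed hbij (a, b)).1 = transposedLam hbij hlam hρ a b := rfl

include hlam in
theorem exists_transposed_snd_eq (t : D) : ∃ a : D, (transposed hbij (a, t)).2 = t := by
  have h : r (t, squareMap lam t) = (t, (r (t, squareMap lam t)).2) :=
    Prod.ext (by rw [hlam]; exact Equiv.apply_symm_apply _ _) rfl
  refine ⟨(r (t, squareMap lam t)).2, ?_⟩
  change ((Equiv.ofBijective r hbij).symm (t, _)).1 = t
  rw [← h, Equiv.ofBijective_symm_apply_apply]

end Transposed

namespace IsYBE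

variable {r : D × D → D × D} (hYB : IsYBE r) (hbij : Bijective r) {lam : D → Perm D}
  (hlam : ∀ a b : D, (r (a, b)).1 = lam a b)

include hYB in
theorem transposed_isYBE : IsYBE (transposed hbij) :=
  (IsYBE.symm (e := Equiv.ofBijective r hbij) hYB).prodSwap_conj

include hYB hbij hlam in
theorem squareMap_bijective_of_rho_bijective
    (hρ : ∀ b : D, Bijective (fun a : D => (r (a, b)).2)) : Bijective (squareMap lam) := by
  have hinv : LeftInverse (squareMap lam) (squareMap (transposedLam hbij hlam hρ)) := fun t => by
    change squareMap lam (lam ((rhoPerm hρ t).symm t) t) = t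
    have ht : (r ((rhoPerm hρ t).symm t, t)).2 = t := (rhoPerm hρ t).apply_symm_apply t
    rw [squareMap_lam_apply hYB hlam, ht, squareMap, Equiv.apply_symm_apply]
  have hsurj : Surjective (squareMap (transposedLam hbij hlam hρ)) :=
    squareMap_surjective (transposed_isYBE hYB hbij) (transposed_fst hbij hlam hρ)
      (exists_transposed_snd_eq hbij hlam)
  exact bijective_iff_has_inverse.mpr ⟨_, hinv.rightInverse_of_surjective hsurj, hinv⟩

end IsYBE

end

/-- Let `(D, r)` be a bijective left non-degenerate solution of the
Yang--Baxter equation, with `λ_a = r(a, -).1` bijective (encoded by the permutations `lam a`),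
and let `𝔮(a) = λ_a⁻¹(a)` be its square map. Then `r` is right non-degenerate if and only if
`𝔮` is bijective. -/
theorem rightNonDegenerate_iff_squareMap_bijective {D : Type*}
    (r : D × D → D × D) (hYB : IsYBE r) (hbij : Function.Bijective r)
    (lam : D → Equiv.Perm D) (hlam : ∀ a b : D, (r (a, b)).1 = lam a b) :
    (∀ b : D, Function.Bijective (fun a : D => (r (a, b)).2)) ↔
      Function.Bijective (fun a : D => (lam a)⁻¹ a) :=
  ⟨hYB.squareMap_bijective_of_rho_bijective hbij hlam,
    hYB.rho_bijective_of_squareMap_bijective hlam hbij⟩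
end

section
/- Let (D,▷) be a rack with derived solution r_▷. Then for all a, b ∈ D and all n ∈ ℕ: r_▷^{2n}(a,b) = ((L_bL_a)^n L_a^{-n}(a), (L_bL_a)^n L_b^{-n}(b)) and r_▷^{2n+1}(a,b) = ((L_bL_a)^n L_b^{-n}(b), (L_bL_a)^{n+1} L_a^{-(n+1)}(a)). -/
/-- Let `(D, ▷)` be a rack, encoded by its left multiplication
permutations `L a` (so `a ▷ b = L a b`, self-distributivity holds and every `L a` is
bijective), and let `r_▷(a,b) = (b, b ▷ a)` be its derived solution. Then for all `a b` and
`n : ℕ`,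
`r_▷^(2n)(a,b) = ((L_b L_a)^n L_a^{-n} a, (L_b L_a)^n L_b^{-n} b)` and
`r_▷^(2n+1)(a,b) = ((L_b L_a)^n L_b^{-n} b, (L_b L_a)^(n+1) L_a^{-(n+1)} a)`. -/
theorem rack_derived_solution_powers {D : Type*} (L : D → Equiv.Perm D)
    (hsd : ∀ a b c : D, L a (L b c) = L (L a b) (L a c))
    (r : D × D → D × D) (hr : ∀ a b : D, r (a, b) = (b, L b a))
    (n : ℕ) (a b : D) :
    r^[2 * n] (a, b) =
        (((L b * L a) ^ n * ((L a)⁻¹) ^ n) a, ((L b * L a) ^ n * ((L b)⁻¹) ^ n) b) ∧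
    r^[2 * n + 1] (a, b) =
        (((L b * L a) ^ n * ((L b)⁻¹) ^ n) b,
         ((L b * L a) ^ (n + 1) * ((L a)⁻¹) ^ (n + 1)) a) := by
  have hconj : ∀ c d : D, L (L c d) = L c * L d * (L c)⁻¹ := by
    intro c d
    ext e
    have := hsd c d ((L c)⁻¹ e)
    simpa [Equiv.Perm.mul_apply] using this.symm
  set A := L a with hA
  set B := L b with hB
  have key : ∀ m : ℕ,
      r^[2 * m] (a, b) = (((B * A) ^ m * (A⁻¹) ^ m) a, ((B * A) ^ m * (B⁻¹) ^ m) b) ∧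
      r^[2 * m + 1] (a, b) =
        (((B * A) ^ m * (B⁻¹) ^ m) b, ((B * A) ^ (m + 1) * (A⁻¹) ^ (m + 1)) a) ∧
      L (((B * A) ^ m * (A⁻¹) ^ m) a) = (B * A) ^ m * A * ((B * A) ^ m)⁻¹ ∧
      L (((B * A) ^ m * (B⁻¹) ^ m) b) = (B * A) ^ m * B * ((B * A) ^ m)⁻¹ := by
    intro m
    induction m with
    | zero =>
      refine ⟨by simp, ?_, by simp [hA], by simp [hB]⟩
      have h1 : ((B * A) ^ 1 * (A⁻¹) ^ 1) a = B a := by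
        simp [Equiv.Perm.mul_apply]
      simp [hr, h1]
      rfl
    | succ m ih =>
      obtain ⟨h0, h1, hLx, hLy⟩ := ih
      -- x_{m+1} = L y_m x_m
      have hxrec : ((B * A) ^ (m + 1) * (A⁻¹) ^ (m + 1)) a
          = L (((B * A) ^ m * (B⁻¹) ^ m) b) (((B * A) ^ m * (A⁻¹) ^ m) a) := by
        rw [hLy, ← Equiv.Perm.mul_apply]
        congr 1
        simp only [pow_succ]
        group
      have hLx' : L (((B * A) ^ (m + 1) * (A⁻¹) ^ (m + 1)) a)
          = (B * A) ^ (m + 1) * A * ((B * A) ^ (m + 1))⁻¹ := by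
        rw [hxrec, hconj, hLx, hLy]
        simp only [pow_succ]
        group
      -- y_{m+1} = L x_{m+1} y_m
      have hyrec : ((B * A) ^ (m + 1) * (B⁻¹) ^ (m + 1)) b
          = L (((B * A) ^ (m + 1) * (A⁻¹) ^ (m + 1)) a) (((B * A) ^ m * (B⁻¹) ^ m) b) := by
        rw [hLx', ← Equiv.Perm.mul_apply]
        congr 1
        simp only [pow_succ]
        group
      have hLy' : L (((B * A) ^ (m + 1) * (B⁻¹) ^ (m + 1)) b)
          = (B * A) ^ (m + 1) * B * ((B * A) ^ (m + 1))⁻¹ := by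
        rw [hyrec, hconj, hLx', hLy]
        simp only [pow_succ]
        group
      have e1 : 2 * (m + 1) = (2 * m + 1) + 1 := by ring
      have heven : r^[2 * (m + 1)] (a, b)
          = (((B * A) ^ (m + 1) * (A⁻¹) ^ (m + 1)) a,
             ((B * A) ^ (m + 1) * (B⁻¹) ^ (m + 1)) b) := by
        rw [e1, Function.iterate_succ_apply', h1, hr, ← hyrec]
      refine ⟨heven, ?_, hLx', hLy'⟩
      have hxrec2 : ((B * A) ^ (m + 2) * (A⁻¹) ^ (m + 2)) a
          = L (((B * A) ^ (m + 1) * (B⁻¹) ^ (m + 1)) b)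
              (((B * A) ^ (m + 1) * (A⁻¹) ^ (m + 1)) a) := by
        rw [hLy', ← Equiv.Perm.mul_apply]
        congr 1
        simp only [pow_succ]
        group
      rw [Function.iterate_succ_apply', heven, hr, ← hxrec2]
  exact ⟨(key n).1, (key n).2.1⟩
end

section
/- Let (D,▷) be a rack and n a positive integer. Then r_▷^{2n} = id on D × D if and only if (L_bL_a)^n L_b^{-n}(b) = b holds for all a, b ∈ D. -/
section Aux

variable {D : Type*} (L : D → Equiv.Perm D)

/-- `g` conjugates `L` correctly. -/
def LConj (g : Equiv.Perm D) : Prop := ∀ x : D, L (g x) = g * L x * g⁻¹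

variable {L}

lemma lconj_mul {g h : Equiv.Perm D} (hg : LConj L g) (hh : LConj L h) :
    LConj L (g * h) := by
  intro x
  have : (g * h) x = g (h x) := rfl
  rw [this, hg, hh]
  group

lemma lconj_inv {g : Equiv.Perm D} (hg : LConj L g) : LConj L g⁻¹ := by
  intro x
  have h1 := hg (g⁻¹ x)
  have h2 : g (g⁻¹ x) = x := g.apply_symm_apply x
  rw [h2] at h1
  rw [h1]
  group

lemma lconj_pow {g : Equiv.Perm D} (hg : LConj L g) (k : ℕ) : LConj L (g ^ k) := by
  induction k with
  | zero => intro x; simp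
  | succ m ih =>
      have := lconj_mul ih hg
      simpa [pow_succ] using this

lemma lconj_base (hsd : ∀ a b c : D, L a (L b c) = L (L a b) (L a c)) (a : D) :
    LConj L (L a) := by
  intro x
  ext y
  have h := hsd a x ((L a)⁻¹ y)
  rw [show (L a) ((L a)⁻¹ y) = y from (L a).apply_symm_apply y] at h
  simp only [Equiv.Perm.mul_apply, Equiv.Perm.coe_mul, Function.comp_apply]
  rw [← h]

end Aux

/-- Let `(D, ▷)` be a rack, encoded by its left multiplication
permutations `L a` (so `a ▷ b = L a b`), with derived solution `r_▷(a,b) = (b, b ▷ a)`, and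
let `n` be a positive integer. Then `r_▷^(2n) = id` if and only if
`(L_b L_a)^n L_b^{-n} b = b` for all `a b ∈ D`. -/
theorem rack_derived_solution_even_power_eq_id {D : Type*} (L : D → Equiv.Perm D)
    (hsd : ∀ a b c : D, L a (L b c) = L (L a b) (L a c))
    (r : D × D → D × D) (hr : ∀ a b : D, r (a, b) = (b, L b a))
    (n : ℕ) (hn : 1 ≤ n) :
    r^[2 * n] = id ↔ ∀ a b : D, ((L b * L a) ^ n * ((L b)⁻¹) ^ n) b = b := by
  have hbase := lconj_base hsd
  -- key iteration formula
  have key : ∀ (k : ℕ) (a b : D),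
      r^[2 * k] (a, b) =
        (((L b * L a) ^ k * ((L a)⁻¹) ^ k) a, ((L b * L a) ^ k * ((L b)⁻¹) ^ k) b) := by
    intro k
    induction k with
    | zero => intro a b; simp
    | succ m ih =>
        intro a b
        have hsplit : 2 * (m + 1) = 2 + 2 * m := by ring
        rw [hsplit, Function.iterate_add_apply, ih a b]
        set A := L a with hA
        set B := L b with hB
        set P : Equiv.Perm D := (B * A) ^ m * (A⁻¹) ^ m with hP
        set Q : Equiv.Perm D := (B * A) ^ m * (B⁻¹) ^ m with hQ
        have hQc : LConj L Q := lconj_mul (lconj_pow (lconj_mul (hbase b) (hbase a)) m)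
          (lconj_pow (lconj_inv (hbase b)) m)
        -- r^[2] (Pa, Qb) = (L (Qb) (Pa), L (L (Qb) (Pa)) (Qb))
        have hr2 : r^[2] (P a, Q b) = (L (Q b) (P a), L (L (Q b) (P a)) (Q b)) := by
          show r (r (P a, Q b)) = _
          rw [hr, hr]
        rw [hr2]
        -- first coordinate
        have hfst : L (Q b) (P a) = ((B * A) ^ (m + 1) * (A⁻¹) ^ (m + 1)) a := by
          rw [hQc b]
          have : (Q * L b * Q⁻¹) (P a) = (Q * B * Q⁻¹ * P) a := rfl
          rw [this]
          have heq : Q * B * Q⁻¹ * P = (B * A) ^ (m + 1) * (A⁻¹) ^ (m + 1) := by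
            rw [hP, hQ]
            simp only [pow_succ]
            group
          rw [heq]
        -- second coordinate
        have hPc' : LConj L ((B * A) ^ (m + 1) * (A⁻¹) ^ (m + 1)) :=
          lconj_mul (lconj_pow (lconj_mul (hbase b) (hbase a)) (m + 1))
            (lconj_pow (lconj_inv (hbase a)) (m + 1))
        have hsnd : L (L (Q b) (P a)) (Q b) = ((B * A) ^ (m + 1) * (B⁻¹) ^ (m + 1)) b := by
          rw [hfst, hPc' a]
          set P' : Equiv.Perm D := (B * A) ^ (m + 1) * (A⁻¹) ^ (m + 1) with hP'
          have : (P' * L a * P'⁻¹) (Q b) = (P' * A * P'⁻¹ * Q) b := rfl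
          rw [this]
          have heq : P' * A * P'⁻¹ * Q = (B * A) ^ (m + 1) * (B⁻¹) ^ (m + 1) := by
            rw [hP', hQ]
            simp only [pow_succ]
            group
          rw [heq]
        rw [hsnd, hfst]
  constructor
  · intro hid a b
    have := congrFun hid (a, b)
    rw [key n a b] at this
    simp only [id_eq, Prod.mk.injEq] at this
    exact this.2
  · intro hC
    -- derive the first-coordinate condition
    have hD : ∀ a b : D, ((L b * L a) ^ n * ((L a)⁻¹) ^ n) a = a := by
      intro a b
      set c := (L a)⁻¹ b with hc
      have hcomm : L b * L a = L a * L c := by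
        have h1 := hbase a c
        have h2 : L a c = b := by rw [hc]; simp
        rw [h2] at h1
        rw [h1]; group
      rw [hcomm]
      exact hC c a
    funext p
    obtain ⟨a, b⟩ := p
    rw [key n a b, hD a b, hC a b]
    rfl
end

section
/- Let (D,▷) be a rack and n ∈ ℕ. Then r_▷^{2n+1} = id on D × D if and only if (D,▷) is a quandle and (L_aL_b)^n(a) = b holds for all a, b ∈ D. -/
private lemma perm_apply_inv_self {α : Type*} (f : Equiv.Perm α) (x : α) : f (f⁻¹ x) = x :=
  (Equiv.eq_symm_apply f).mp rfl

private lemma rack_conj1 {D : Type*} (L : D → Equiv.Perm D)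
    (hsd : ∀ a b c : D, L a (L b c) = L (L a b) (L a c))
    (a b : D) : L (L a b) = L a * L b * (L a)⁻¹ := by
  ext c
  have h := hsd a b ((L a)⁻¹ c)
  simp only [perm_apply_inv_self] at h
  simp [Equiv.Perm.mul_apply, ← h]

private lemma rack_L_inv_self {D : Type*} (L : D → Equiv.Perm D)
    (hsd : ∀ a b c : D, L a (L b c) = L (L a b) (L a c))
    (c : D) : L ((L c)⁻¹ c) = L c := by
  have h := rack_conj1 L hsd c ((L c)⁻¹ c)
  simp only [perm_apply_inv_self] at h
  have h2 : (L c)⁻¹ * L c * L c = (L c)⁻¹ * (L c * L ((L c)⁻¹ c) * (L c)⁻¹) * L c := by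
    rw [← h]
  group at h2
  simpa using h2.symm

private lemma rack_L_pow_inv {D : Type*} (L : D → Equiv.Perm D)
    (hsd : ∀ a b c : D, L a (L b c) = L (L a b) (L a c))
    (c : D) : ∀ k : ℕ, L (((L c) ^ k)⁻¹ c) = L c := by
  intro k
  induction k with
  | zero => simp
  | succ k ih =>
    have hy : ((L c) ^ (k + 1))⁻¹ c = (L (((L c) ^ k)⁻¹ c))⁻¹ (((L c) ^ k)⁻¹ c) := by
      rw [ih, pow_succ, mul_inv_rev, Equiv.Perm.mul_apply]
    rw [hy, rack_L_inv_self L hsd, ih]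

private lemma rack_conj_pow {D : Type*} (L : D → Equiv.Perm D)
    (g : Equiv.Perm D) (hg : ∀ x, L (g x) = g * L x * g⁻¹) :
    ∀ (k : ℕ) (x : D), L ((g ^ k) x) = g ^ k * L x * (g ^ k)⁻¹ := by
  intro k
  induction k with
  | zero => simp
  | succ k ih =>
    intro x
    rw [pow_succ, Equiv.Perm.mul_apply, ih, hg]
    group

private lemma rack_key {D : Type*} (L : D → Equiv.Perm D)
    (hsd : ∀ a b c : D, L a (L b c) = L (L a b) (L a c))
    (r : D × D → D × D) (hr : ∀ a b : D, r (a, b) = (b, L b a)) :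
    ∀ (k : ℕ) (a b : D),
      r^[2 * k] (a, b) =
        (((L b * L a) ^ k) (((L a) ^ k)⁻¹ a), ((L b * L a) ^ k) (((L b) ^ k)⁻¹ b)) := by
  intro k a b
  have hg : ∀ x, L ((L b * L a) x) = (L b * L a) * L x * (L b * L a)⁻¹ := by
    intro x
    rw [Equiv.Perm.mul_apply, rack_conj1 L hsd, rack_conj1 L hsd]
    group
  induction k with
  | zero => simp
  | succ k ih =>
    have h2 : 2 * (k + 1) = (2 * k) + 1 + 1 := by ring
    rw [h2, Function.iterate_succ_apply', Function.iterate_succ_apply', ih, hr, hr]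
    have hLq : L (((L b * L a) ^ k) (((L b) ^ k)⁻¹ b)) =
        (L b * L a) ^ k * L b * ((L b * L a) ^ k)⁻¹ := by
      rw [rack_conj_pow L (L b * L a) hg, rack_L_pow_inv L hsd]
    have e1 : L (((L b * L a) ^ k) (((L b) ^ k)⁻¹ b)) (((L b * L a) ^ k) (((L a) ^ k)⁻¹ a)) =
        ((L b * L a) ^ k) (L b (((L a) ^ k)⁻¹ a)) := by
      rw [hLq]
      simp [Equiv.Perm.mul_apply]
    have e2 : L (((L b * L a) ^ k) (L b (((L a) ^ k)⁻¹ a))) =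
        (L b * L a) ^ k * (L b * L a * (L b)⁻¹) * ((L b * L a) ^ k)⁻¹ := by
      rw [rack_conj_pow L (L b * L a) hg, rack_conj1 L hsd, rack_L_pow_inv L hsd]
    rw [e1, e2]
    refine Prod.ext ?_ ?_
    · simp [pow_succ, mul_inv_rev, Equiv.Perm.mul_apply]
    · simp [pow_succ, mul_inv_rev, Equiv.Perm.mul_apply]

private lemma rack_fix {D : Type*} (L : D → Equiv.Perm D)
    (hq : ∀ a : D, L a a = a) (c : D) (k : ℕ) : (((L c) ^ k)⁻¹) c = c := by
  have hpow : ((L c) ^ k) c = c := by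
    induction k with
    | zero => simp
    | succ m ih => rw [pow_succ, Equiv.Perm.mul_apply, hq, ih]
  exact ((L c) ^ k).injective (by rw [perm_apply_inv_self, hpow])

/-- Let `(D, ▷)` be a rack, encoded by its left multiplication
permutations `L a` (so `a ▷ b = L a b`), with derived solution `r_▷(a,b) = (b, b ▷ a)`, and
let `n : ℕ`. Then `r_▷^(2n+1) = id` if and only if `(D, ▷)` is a quandle
(`a ▷ a = a` for all `a`) and `(L_a L_b)^n a = b` for all `a b ∈ D`. -/
theorem rack_derived_solution_odd_power_eq_id {D : Type*} (L : D → Equiv.Perm D)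
    (hsd : ∀ a b c : D, L a (L b c) = L (L a b) (L a c))
    (r : D × D → D × D) (hr : ∀ a b : D, r (a, b) = (b, L b a))
    (n : ℕ) :
    r^[2 * n + 1] = id ↔
      ((∀ a : D, L a a = a) ∧ ∀ a b : D, ((L a * L b) ^ n) a = b) := by
  have hg : ∀ a b : D, ∀ x, L ((L b * L a) x) = (L b * L a) * L x * (L b * L a)⁻¹ := by
    intro a b x
    rw [Equiv.Perm.mul_apply, rack_conj1 L hsd, rack_conj1 L hsd]
    group
  have hform : ∀ a b : D, r^[2 * n + 1] (a, b) =
      (((L b * L a) ^ n) (((L b) ^ n)⁻¹ b),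
        ((L b * L a) ^ n) (L b (((L a) ^ n)⁻¹ a))) := by
    intro a b
    rw [Function.iterate_succ_apply', rack_key L hsd r hr, hr]
    refine Prod.ext rfl ?_
    rw [rack_conj_pow L (L b * L a) (hg a b), rack_L_pow_inv L hsd]
    simp [Equiv.Perm.mul_apply]
  constructor
  · intro h
    have hpt : ∀ a b : D,
        (((L b * L a) ^ n) (((L b) ^ n)⁻¹ b),
          ((L b * L a) ^ n) (L b (((L a) ^ n)⁻¹ a))) = (a, b) := by
      intro a b
      rw [← hform a b, h]; rfl
    have hE1 : ∀ a b : D, ((L b * L a) ^ n) (((L b) ^ n)⁻¹ b) = a :=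
      fun a b => (Prod.ext_iff.mp (hpt a b)).1
    have hE2 : ∀ a b : D, ((L b * L a) ^ n) (L b (((L a) ^ n)⁻¹ a)) = b :=
      fun a b => (Prod.ext_iff.mp (hpt a b)).2
    have hq : ∀ a : D, L a a = a := by
      intro a
      have h1 : ((L a) ^ n) a = a := by
        have := hE1 a a
        rwa [← Equiv.Perm.mul_apply, show (L a * L a) ^ n * ((L a) ^ n)⁻¹ = (L a) ^ n by
          rw [← pow_two, ← pow_mul]; group]
          at this
      have h2 : L a (((L a) ^ n) a) = a := by
        have := hE2 a a
        rwa [← Equiv.Perm.mul_apply, ← Equiv.Perm.mul_apply,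
          show (L a * L a) ^ n * L a * ((L a) ^ n)⁻¹ = L a * (L a) ^ n by
            rw [← pow_two, ← pow_mul]; group,
          Equiv.Perm.mul_apply] at this
      rwa [h1] at h2
    refine ⟨hq, fun a b => ?_⟩
    have hfix : ∀ c : D, (((L c) ^ n)⁻¹) c = c := fun c => rack_fix L hq c n
    have := hE1 b a
    rwa [hfix] at this
  · rintro ⟨hq, hid⟩
    funext p
    obtain ⟨a, b⟩ := p
    have hfix : ∀ c : D, (((L c) ^ n)⁻¹) c = c := fun c => rack_fix L hq c n
    rw [hform a b, hfix, hfix]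
    refine Prod.ext ?_ ?_
    · exact hid b a
    · show ((L b * L a) ^ n) (L b a) = b
      rw [← Equiv.Perm.mul_apply,
        show (L b * L a) ^ n * L b = L b * (L a * L b) ^ n by
          exact ((SemiconjBy.pow_right (by unfold SemiconjBy; group) n)).symm,
        Equiv.Perm.mul_apply, hid a b, hq]
end

section
/- Let (D,⊢,⊣,∘) be a di-skew brace. Then the set of bar-units of the g-digroup (D,⊢,⊣) coincides with the set of idempotents of (D,∘): an element e ∈ D satisfies e ∈ E(D) if and only if e ∘ e = e. -/
/-- A (left) di-skew brace: the additive structure `(D, ⊢, ⊣)` is a g-digroup, the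
multiplicative structure `(D, ∘)` is a right group (an associative operation such that for
all `a b` there is a unique `x` with `a ∘ x = b`), and the compatibility laws
`a ∘ (b ⊢ c) = a ∘ b ⊢ a⁻¹ ⊢ a ∘ c`, `a ∘ (b ⊣ c) = a ∘ b ⊣ a⁻¹ ⊣ a ∘ c` and
`(a ⊢ b) ∘ c = (a ⊣ b) ∘ c` hold, where `a⁻¹ ⊢ x` means `(I e a) ⊢ x` and `x ⊣ a⁻¹` means
`x ⊣ (J e a)` for any bar-unit `e`. -/
structure DiSkewBrace (D : Type*) extends GDigroup D where
  circ : D → D → D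
  circ_assoc : ∀ a b c : D, circ (circ a b) c = circ a (circ b c)
  circ_rightGroup : ∀ a b : D, ∃! x : D, circ a x = b
  d1 : ∀ e : D, IsBarUnit vd dv e →
    ∀ a b c : D, circ a (vd b c) = vd (circ a b) (vd (I e a) (circ a c))
  d2 : ∀ e : D, IsBarUnit vd dv e →
    ∀ a b c : D, circ a (dv b c) = dv (dv (circ a b) (J e a)) (circ a c)
  d3 : ∀ a b c : D, circ (vd a b) c = circ (dv a b) c

namespace GDigroup

variable {D : Type*} (G : GDigroup D) {e f : D}

theorem I_self (he : IsBarUnit G.vd G.dv e) : G.I e e = e :=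
  (G.I_unique e e e he (he e).2).symm

theorem vd_barUnit_of_vd_self (he : IsBarUnit G.vd G.dv e) {t : D} (ht : G.vd t t = t) :
    G.vd t e = e :=
  calc G.vd t e = G.vd t (G.vd t (G.J e t)) := by rw [G.J_spec e t he]
    _ = G.vd (G.vd t t) (G.J e t) := (G.vd_assoc _ _ _).symm
    _ = e := by rw [ht, G.J_spec e t he]

theorem vd_eq_self_of_dv_J_eq_self (hf : IsBarUnit G.vd G.dv f)
    (h : ∀ b, G.dv b (G.J f e) = b) (a : D) : G.vd e a = a :=
  calc G.vd e a = G.vd (G.dv e (G.J f e)) a := by rw [h e]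
    _ = G.vd (G.vd e (G.J f e)) a := (G.bar_left _ _ _).symm
    _ = a := by rw [G.J_spec f e hf, (hf a).1]

theorem dv_eq_self_of_vd_I_eq_self (hf : IsBarUnit G.vd G.dv f)
    (h : ∀ c, G.vd (G.I f e) c = c) (a : D) : G.dv a e = a :=
  calc G.dv a e = G.dv a (G.vd (G.I f e) e) := by rw [h e]
    _ = G.dv a (G.dv (G.I f e) e) := G.bar_right _ _ _
    _ = a := by rw [G.I_spec f e hf, (hf a).2]

end GDigroup

namespace DiSkewBrace

variable {D : Type*} (S : DiSkewBrace D) {e f : D}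

theorem circ_left_cancel {a x y : D} (h : S.circ a x = S.circ a y) : x = y :=
  (S.circ_rightGroup a (S.circ a y)).unique h rfl

theorem circ_left_id_of_circ_self (he : S.circ e e = e) (c : D) : S.circ e c = c :=
  S.circ_left_cancel (by rw [← S.circ_assoc, he])

theorem vd_circ_self_of_isBarUnit (he : IsBarUnit S.vd S.dv e) :
    S.vd (S.circ e e) (S.circ e e) = S.circ e e := by
  have h := S.d1 e he e e e
  rw [(he e).1, S.I_self he, (he (S.circ e e)).1] at h
  exact h.symm

theorem circ_self_of_isBarUnit (he : IsBarUnit S.vd S.dv e) : S.circ e e = e := by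
  have hte : S.vd (S.circ e e) e = e :=
    S.vd_barUnit_of_vd_self he (S.vd_circ_self_of_isBarUnit he)
  have h := S.d3 (S.circ e e) e e
  rw [hte, (he (S.circ e e)).2, S.circ_assoc] at h
  exact (S.circ_left_cancel h).symm

theorem vd_I_eq_self_of_circ_left_id (hf : IsBarUnit S.vd S.dv f)
    (he : ∀ c, S.circ e c = c) (c : D) : S.vd (S.I f e) c = c := by
  have h := S.d1 f hf e f c
  rw [he, he, he, (hf c).1, (hf (S.vd (S.I f e) c)).1] at h
  exact h.symm

theorem dv_J_eq_self_of_circ_left_id (hf : IsBarUnit S.vd S.dv f)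
    (he : ∀ c, S.circ e c = c) (b : D) : S.dv b (S.J f e) = b := by
  have h := S.d2 f hf e b f
  rw [he, he, he, (hf b).2, (hf (S.dv b (S.J f e))).2] at h
  exact h.symm

theorem isBarUnit_of_circ_left_id (he : ∀ c, S.circ e c = c) : IsBarUnit S.vd S.dv e := by
  obtain ⟨f, hf⟩ := S.exists_barUnit
  exact fun a =>
    ⟨S.vd_eq_self_of_dv_J_eq_self hf (S.dv_J_eq_self_of_circ_left_id hf he) a,
      S.dv_eq_self_of_vd_I_eq_self hf (S.vd_I_eq_self_of_circ_left_id hf he) a⟩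

end DiSkewBrace

/-- In a di-skew brace `(D, ⊢, ⊣, ∘)` the set of bar-units of the
g-digroup `(D, ⊢, ⊣)` coincides with the set of idempotents of `(D, ∘)`. -/
theorem diSkewBrace_barUnit_iff_circ_idempotent {D : Type*} (S : DiSkewBrace D) (e : D) :
    IsBarUnit S.vd S.dv e ↔ S.circ e e = e :=
  ⟨S.circ_self_of_isBarUnit,
    fun he => S.isBarUnit_of_circ_left_id (S.circ_left_id_of_circ_self he)⟩
end

section
/- Let (D,⊢,⊣,∘) be a di-skew brace and for each a ∈ D define λ_a : D → D by λ_a(b) = a^{-1} ⊢ a ∘ b. Then: (1) λ_a is a bijection preserving both ⊢ and ⊣ (an automorphism of the g-digroup (D,⊢,⊣)), with inverse given by λ_a^{-1}(b) = a^- ∘ (a ⊢ b); (2) λ_{a ∘ b} = λ_a λ_b for all a, b ∈ D. -/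
/-!
Everything follows from the identity `a ⊢ λ_a(b) = a ∘ b`: it characterises `λ_a(x)` as the
unique `b` with `a ∘ x = a ⊢ b`, so bijectivity of `λ_a` is the unique solvability of `a ∘ x = y`,
and the brace law `a ∘ (b ⊢ c) = a ∘ b ⊢ a⁻¹ ⊢ a ∘ c` becomes `a ∘ (b ⊢ c) = a ∘ b ⊢ λ_a(c)`,
which gives both `λ_a(b ⊢ c) = λ_a(b) ⊢ λ_a(c)` and, applied to `c ↦ λ_b(c)`, `λ_{a∘b} = λ_a λ_b`.
-/

namespace GDigroup

variable {D : Type*} (G : GDigroup D) {e : D} (he : IsBarUnit G.vd G.dv e)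
include he

theorem J_eq_vd_I (a : D) : G.J e a = G.vd (G.I e a) e :=
  calc G.J e a = G.vd e (G.J e a) := ((he _).1).symm
    _ = G.vd (G.dv (G.I e a) a) (G.J e a) := by rw [G.I_spec e a he]
    _ = G.vd (G.I e a) (G.vd a (G.J e a)) := by rw [← G.bar_left, G.vd_assoc]
    _ = G.vd (G.I e a) e := by rw [G.J_spec e a he]

theorem vd_J_eq_vd_I (a x : D) : G.vd (G.J e a) x = G.vd (G.I e a) x := by
  rw [G.J_eq_vd_I he, G.vd_assoc, (he x).1]

theorem I_eq_dv_J (a : D) : G.I e a = G.dv e (G.J e a) :=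
  calc G.I e a = G.dv (G.I e a) e := ((he _).2).symm
    _ = G.dv (G.I e a) (G.vd a (G.J e a)) := by rw [G.J_spec e a he]
    _ = G.dv (G.dv (G.I e a) a) (G.J e a) := by rw [G.bar_right, G.dv_assoc]
    _ = G.dv e (G.J e a) := by rw [G.I_spec e a he]

theorem dv_I_eq_dv_J (a x : D) : G.dv x (G.I e a) = G.dv x (G.J e a) := by
  rw [G.I_eq_dv_J he, ← G.bar_right, (he _).1]

theorem I_vd_cancel_left (a x : D) : G.vd (G.I e a) (G.vd a x) = x := by
  rw [← G.vd_assoc, G.bar_left, G.I_spec e a he, (he x).1]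

theorem vd_I_cancel_left (a x : D) : G.vd a (G.vd (G.I e a) x) = x := by
  rw [← G.vd_J_eq_vd_I he, ← G.vd_assoc, G.J_spec e a he, (he x).1]

end GDigroup

namespace DiSkewBrace

variable {D : Type*} (S : DiSkewBrace D)

theorem circ_left_injective (a : D) : Function.Injective (S.circ a) := by
  intro x y hxy
  obtain ⟨z, -, hz⟩ := S.circ_rightGroup a (S.circ a y)
  exact (hz x hxy).trans (hz y rfl).symm

def lambda (e a b : D) : D := S.vd (S.I e a) (S.circ a b)

variable {S} {e : D} (he : IsBarUnit S.vd S.dv e)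
include he

theorem vd_lambda (a b : D) : S.vd a (S.lambda e a b) = S.circ a b :=
  S.vd_I_cancel_left he a _

theorem lambda_eq_iff {a x b : D} : S.lambda e a x = b ↔ S.circ a x = S.vd a b := by
  constructor
  · rintro rfl
    exact (S.vd_lambda he a x).symm
  · intro h
    rw [lambda, h, S.I_vd_cancel_left he]

theorem circ_vd (a b c : D) : S.circ a (S.vd b c) = S.vd (S.circ a b) (S.lambda e a c) :=
  S.d1 e he a b c

theorem lambda_bijective (a : D) : Function.Bijective (S.lambda e a) := by
  refine ⟨fun x y hxy => S.circ_left_injective a ?_, fun b => ?_⟩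
  · rw [← S.vd_lambda he, hxy, S.vd_lambda he]
  · obtain ⟨x, hx, -⟩ := S.circ_rightGroup a (S.vd a b)
    exact ⟨x, (lambda_eq_iff he).2 hx⟩

theorem lambda_vd (a b c : D) :
    S.lambda e a (S.vd b c) = S.vd (S.lambda e a b) (S.lambda e a c) := by
  rw [lambda, S.circ_vd he, ← S.vd_assoc]
  rfl

theorem lambda_dv (a b c : D) :
    S.lambda e a (S.dv b c) = S.dv (S.lambda e a b) (S.lambda e a c) := by
  rw [lambda, lambda, lambda, S.d2 e he, S.inner_assoc, S.bar_right, ← S.dv_assoc,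
    S.dv_I_eq_dv_J he]

theorem lambda_circ (a b c : D) :
    S.lambda e (S.circ a b) c = S.lambda e a (S.lambda e b c) := by
  rw [lambda_eq_iff he, S.circ_assoc, ← S.vd_lambda he b c, S.circ_vd he]

end DiSkewBrace

/-- Let `(D, ⊢, ⊣, ∘)` be a di-skew brace, `e` a bar-unit and
`λ_a(b) = a⁻¹ ⊢ a ∘ b = (I e a) ⊢ (a ∘ b)`.  Then each `λ_a` is a bijection preserving both
`⊢` and `⊣` (an automorphism of the g-digroup), its inverse is `b ↦ a⁻ ∘ (a ⊢ b)` (where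
`a⁻ ∘ x` denotes the unique left quotient, encoded by the map `ldiv`), and
`λ_{a ∘ b} = λ_a ∘ λ_b`. -/
theorem diSkewBrace_lambda_properties {D : Type*} (S : DiSkewBrace D)
    (e : D) (he : IsBarUnit S.vd S.dv e)
    (lam : D → D → D) (hlam : ∀ a b : D, lam a b = S.vd (S.I e a) (S.circ a b))
    (ldiv : D → D → D) (hldiv : ∀ a b : D, S.circ a (ldiv a b) = b) :
    (∀ a : D, Function.Bijective (lam a)) ∧
    (∀ a b c : D, lam a (S.vd b c) = S.vd (lam a b) (lam a c)) ∧
    (∀ a b c : D, lam a (S.dv b c) = S.dv (lam a b) (lam a c)) ∧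
    (∀ a b : D, lam a (ldiv a (S.vd a b)) = b ∧ ldiv a (S.vd a (lam a b)) = b) ∧
    (∀ a b c : D, lam (S.circ a b) c = lam a (lam b c)) := by
  obtain rfl : lam = S.lambda e := funext fun a => funext (hlam a)
  refine ⟨S.lambda_bijective he, S.lambda_vd he, S.lambda_dv he, fun a b => ⟨?_, ?_⟩,
    S.lambda_circ he⟩
  · exact (DiSkewBrace.lambda_eq_iff he).2 (hldiv a _)
  · exact S.circ_left_injective a (by rw [hldiv, S.vd_lambda he])
end

section
/- Let (D,⊢,⊣,∘) be a di-skew brace and let (D,▷) = Conj(D,⊢,⊣) be its conjugation rack. Then the map a ↦ λ_a, where λ_a(b) = a^{-1} ⊢ a ∘ b, is a twist of (D,▷): each λ_a is a bijective shelf endomorphism of (D,▷) and λ_a λ_b = λ_{λ_a(b)} λ_{λ_{λ_a(b)}^{-1}(λ_a(b) ▷ a)} for all a, b ∈ D. -/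
/-!
Each `λ_a` preserves `⊢` and `⊣` (laws `d1`, `d2`) and is bijective, so it is an automorphism of
the g-digroup and hence of its conjugation rack. The twist identity is a computation with left
`⊢`-translations: `x ↦ a⁻¹ ⊢ x` inverts `x ↦ a ⊢ x`, so every left inverse of `x ↦ w ⊢ x` is
`x ↦ w⁻¹ ⊢ x`. With `w = λ_a b` and `λ_w d = w ▷ a` one finds `w ∘ d = a ⊣ w`, whence
`(w ∘ d) ∘ c = (a ⊢ w) ∘ c = (a ∘ b) ∘ c`, and both sides of the identity applied to `c` equal
`w⁻¹ ⊢ a⁻¹ ⊢ (a ∘ b) ∘ c`.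
-/

namespace GDigroup

variable {D : Type*} (G : GDigroup D)

local infixr:70 " ⊢ " => G.vd
-- `⊣` itself is taken by adjunctions in Mathlib.
local infixl:70 " ⫞ " => G.dv

theorem dv_vd_eq_vd_vd (s t x : D) : (s ⫞ t) ⊢ x = s ⊢ t ⊢ x := by
  rw [← G.bar_left, G.vd_assoc]

theorem vd_dv_eq_dv_dv (x s t : D) : x ⫞ (s ⊢ t) = x ⫞ s ⫞ t := by
  rw [G.bar_right, G.dv_assoc]

def conj (e a b : D) : D := (G.I e a ⊢ b) ⫞ a

theorem conj_vd (e w a x : D) : G.conj e w a ⊢ x = G.I e w ⊢ a ⊢ w ⊢ x := by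
  rw [conj, dv_vd_eq_vd_vd, G.vd_assoc]

section

variable {G} {e : D} (he : IsBarUnit G.vd G.dv e)
include he

theorem I_vd_vd (a x : D) : G.I e a ⊢ a ⊢ x = x := by
  rw [← dv_vd_eq_vd_vd, G.I_spec e a he, (he x).1]

theorem vd_J_vd (a x : D) : a ⊢ G.J e a ⊢ x = x := by
  rw [← G.vd_assoc, G.J_spec e a he, (he x).1]

theorem vd_I_vd_s10 (a x : D) : a ⊢ G.I e a ⊢ x = x := by
  conv_lhs => rw [← vd_J_vd he a x, I_vd_vd he]
  exact vd_J_vd he a x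

theorem dv_I_dv_s10 (x a : D) : x ⫞ G.I e a ⫞ a = x := by
  rw [G.dv_assoc, G.I_spec e a he, (he x).2]

theorem dv_dv_J_s10 (x a : D) : x ⫞ a ⫞ G.J e a = x := by
  rw [← vd_dv_eq_dv_dv, G.J_spec e a he, (he x).2]

theorem dv_J_eq_dv_I (x a : D) : x ⫞ G.J e a = x ⫞ G.I e a := by
  conv_lhs => rw [← dv_I_dv_s10 he x a]
  exact dv_dv_J_s10 he _ a

theorem vd_eq_I_vd_of_vd_vd {s w : D} (h : ∀ y, s ⊢ w ⊢ y = y) (x : D) :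
    s ⊢ x = G.I e w ⊢ x := by
  rw [← h (G.I e w ⊢ x), vd_I_vd_s10 he]

theorem I_conj_vd (w a x : D) : G.I e (G.conj e w a) ⊢ x = G.I e w ⊢ G.I e a ⊢ w ⊢ x := by
  have hinv (y : D) : (G.I e w ⊢ G.I e a ⊢ w) ⊢ G.conj e w a ⊢ y = y := by
    simp only [G.vd_assoc, conj_vd, vd_I_vd_s10 he, I_vd_vd he]
  rw [← vd_eq_I_vd_of_vd_vd he hinv, G.vd_assoc, G.vd_assoc]

end

end GDigroup

section Morphism

variable {D D' : Type*} {G : GDigroup D} {H : GDigroup D'} {f : D → D'}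
  (hvd : ∀ x y, f (G.vd x y) = H.vd (f x) (f y)) (hdv : ∀ x y, f (G.dv x y) = H.dv (f x) (f y))
  (hf : Function.Surjective f)
include hvd hdv hf

theorem IsBarUnit.map {e : D} (he : IsBarUnit G.vd G.dv e) : IsBarUnit H.vd H.dv (f e) := by
  intro x
  obtain ⟨x, rfl⟩ := hf x
  rw [← hvd, ← hdv, (he x).1, (he x).2]
  exact ⟨rfl, rfl⟩

theorem GDigroup.map_I_vd {e : D} (he : IsBarUnit G.vd G.dv e) {e' : D'}
    (he' : IsBarUnit H.vd H.dv e') (b : D) (x : D') :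
    H.vd (f (G.I e b)) x = H.vd (H.I e' (f b)) x :=
  H.vd_eq_I_vd_of_vd_vd he' (fun y => by
    rw [← H.dv_vd_eq_vd_vd, ← hdv, G.I_spec e b he, ((he.map hvd hdv hf) y).1]) x

theorem GDigroup.map_conj {e : D} (he : IsBarUnit G.vd G.dv e) {e' : D'}
    (he' : IsBarUnit H.vd H.dv e') (b c : D) :
    f (G.conj e b c) = H.conj e' (f b) (f c) := by
  rw [GDigroup.conj, GDigroup.conj, hdv, hvd, GDigroup.map_I_vd hvd hdv hf he he']

end Morphism

namespace DiSkewBrace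

variable {D : Type*} (S : DiSkewBrace D)

local infixr:70 " ⊢ " => S.vd
local infixl:70 " ⫞ " => S.dv
local infixr:75 " ∘ " => S.circ

def lam (e a b : D) : D := S.I e a ⊢ a ∘ b

variable {S} {e : D} (he : IsBarUnit S.vd S.dv e)
include he

theorem circ_eq_vd_lam (a b : D) : a ∘ b = a ⊢ S.lam e a b :=
  (S.vd_I_vd_s10 he a _).symm

theorem lam_vd (a b c : D) : S.lam e a (b ⊢ c) = S.lam e a b ⊢ S.lam e a c := by
  rw [lam, lam, lam, S.d1 e he, S.vd_assoc]

theorem lam_dv (a b c : D) : S.lam e a (b ⫞ c) = S.lam e a b ⫞ S.lam e a c := by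
  rw [lam, lam, lam, S.d2 e he, S.dv_J_eq_dv_I he, S.inner_assoc, S.vd_dv_eq_dv_dv]

theorem lam_bijective (a : D) : Function.Bijective (S.lam e a) := by
  refine ⟨fun b b' h => ?_, fun x => ?_⟩
  · have hcirc : a ∘ b = a ∘ b' := by rw [circ_eq_vd_lam he, h, ← circ_eq_vd_lam he]
    exact (S.circ_rightGroup a (a ∘ b')).unique hcirc rfl
  · obtain ⟨b, hb, -⟩ := S.circ_rightGroup a (a ⊢ x)
    exact ⟨b, by rw [lam, hb, S.I_vd_vd he]⟩

theorem lam_conj (a b c : D) :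
    S.lam e a (S.conj e b c) = S.conj e (S.lam e a b) (S.lam e a c) :=
  GDigroup.map_conj (lam_vd he a) (lam_dv he a) (lam_bijective he a).2 he he b c

theorem lam_lam (a b c : D) :
    S.lam e a (S.lam e b c) = S.I e (S.lam e a b) ⊢ S.I e a ⊢ (a ∘ b) ∘ c := by
  rw [lam.eq_1 S e b c, lam_vd he,
    GDigroup.map_I_vd (lam_vd he a) (lam_dv he a) (lam_bijective he a).2 he he,
    lam.eq_1 S e a (b ∘ c), S.circ_assoc]

theorem circ_eq_dv_of_lam_eq_conj {w a d : D} (hd : S.lam e w d = S.conj e w a) :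
    w ∘ d = a ⫞ w := by
  rw [circ_eq_vd_lam he, hd, GDigroup.conj, ← S.inner_assoc, S.vd_I_vd_s10 he]

theorem lam_lam_eq_of_lam_eq_conj {a b d : D}
    (hd : S.lam e (S.lam e a b) d = S.conj e (S.lam e a b) a) (c : D) :
    S.lam e a (S.lam e b c) = S.lam e (S.lam e a b) (S.lam e d c) := by
  rw [lam_lam he, lam_lam he, hd, S.I_conj_vd he, S.vd_I_vd_s10 he, circ_eq_dv_of_lam_eq_conj he hd,
    ← S.d3, ← circ_eq_vd_lam he]

end DiSkewBrace

/-- Let `(D, ⊢, ⊣, ∘)` be a di-skew brace, `e` a bar-unit, and let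
`(D, ▷) = Conj(D, ⊢, ⊣)` be its conjugation rack, `a ▷ b = a⁻¹ ⊢ b ⊣ a = ((I e a) ⊢ b) ⊣ a`.
Then the map `a ↦ λ_a`, with `λ_a(b) = a⁻¹ ⊢ a ∘ b`, is a twist of `(D, ▷)`: each `λ_a` is
a bijective shelf endomorphism of `(D, ▷)` and
`λ_a λ_b = λ_{λ_a(b)} λ_{λ_{λ_a(b)}⁻¹(λ_a(b) ▷ a)}` for all `a b`. -/
theorem diSkewBrace_lambda_is_twist {D : Type*} (S : DiSkewBrace D)
    (e : D) (he : IsBarUnit S.vd S.dv e)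
    (tri : D → D → D) (htri : ∀ a b : D, tri a b = S.dv (S.vd (S.I e a) b) a)
    (lam : D → D → D) (hlam : ∀ a b : D, lam a b = S.vd (S.I e a) (S.circ a b))
    (laminv : D → D → D)
    (hlaminv : ∀ a b : D, laminv a (lam a b) = b ∧ lam a (laminv a b) = b) :
    (∀ a : D, Function.Bijective (lam a)) ∧
    (∀ a b c : D, lam a (tri b c) = tri (lam a b) (lam a c)) ∧
    (∀ a b c : D,
      lam a (lam b c) = lam (lam a b) (lam (laminv (lam a b) (tri (lam a b) a)) c)) := by
  obtain rfl : tri = S.conj e := funext₂ htri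
  obtain rfl : lam = S.lam e := funext₂ hlam
  exact ⟨S.lam_bijective he, S.lam_conj he,
    fun a b c => S.lam_lam_eq_of_lam_eq_conj he (hlaminv _ _).2 c⟩
end

section
/- Let D be a group and f, g : D → D maps satisfying f(a)f(b) = f(f(a)b) = f(a·g(b)) and g(a)g(b) = g(a·g(b)) = g(f(a)b) for all a, b ∈ D (an averaging pair). Define a ⊢ b := f(a)b and a ⊣ b := a·g(b). Then (D,⊢,⊣) is a disemigroup. If moreover there exists e ∈ D with f(e) = 1 = g(e), then (D,⊢,⊣) is a g-digroup whose set of bar-units is exactly {e ∈ D : f(e) = 1 and g(e) = 1}, and whose unilateral inverses are given by a^{I_e} = e·g(a)^{-1} and a^{J_e} = f(a)^{-1}·e for all bar-units e and a ∈ D. -/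
section

variable {D : Type*}

structure IsAveragingPair [Mul D] (f g : D → D) : Prop where
  mul_f_eq_f_mul : ∀ a b : D, f a * f b = f (f a * b)
  mul_f_eq_f_mul_g : ∀ a b : D, f a * f b = f (a * g b)
  mul_g_eq_g_mul_g : ∀ a b : D, g a * g b = g (a * g b)
  mul_g_eq_g_f_mul : ∀ a b : D, g a * g b = g (f a * b)

structure IsDisemigroup (vd dv : D → D → D) : Prop where
  vd_assoc : ∀ a b c : D, vd (vd a b) c = vd a (vd b c)
  dv_assoc : ∀ a b c : D, dv (dv a b) c = dv a (dv b c)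
  dv_vd_assoc : ∀ a b c : D, dv (vd a b) c = vd a (dv b c)
  dv_vd_right : ∀ a b c : D, dv a (vd b c) = dv a (dv b c)
  vd_dv_left : ∀ a b c : D, vd (vd a b) c = vd (dv a b) c

variable [Group D] {f g : D → D}

theorem IsAveragingPair.isDisemigroup (h : IsAveragingPair f g) :
    IsDisemigroup (fun a b => f a * b) (fun a b => a * g b) where
  vd_assoc a b c := by simp only [← h.mul_f_eq_f_mul, mul_assoc]
  dv_assoc a b c := by simp only [← h.mul_g_eq_g_mul_g, mul_assoc]
  dv_vd_assoc a b c := mul_assoc _ _ _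
  dv_vd_right a b c := by rw [← h.mul_g_eq_g_f_mul, h.mul_g_eq_g_mul_g]
  vd_dv_left a b c := by rw [← h.mul_f_eq_f_mul, h.mul_f_eq_f_mul_g]

theorem isBarUnit_mul_iff (e : D) :
    IsBarUnit (fun a b => f a * b) (fun a b => a * g b) e ↔ f e = 1 ∧ g e = 1 := by
  refine ⟨fun h => ⟨by simpa using (h 1).1, by simpa using (h 1).2⟩, ?_⟩
  rintro ⟨hf, hg⟩ a
  simp [hf, hg]

end

/-- Let `D` be a group and `(f, g)` an averaging pair on `D`, i.e.
`f(a)f(b) = f(f(a)b) = f(a·g(b))` and `g(a)g(b) = g(a·g(b)) = g(f(a)b)` for all `a b`.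
With `a ⊢ b := f(a)·b` and `a ⊣ b := a·g(b)`, the structure `(D, ⊢, ⊣)` is a disemigroup.
If moreover some `e` satisfies `f(e) = 1 = g(e)` (compatibility), then `(D, ⊢, ⊣)` is a
g-digroup whose bar-units are exactly `{e | f(e) = 1 ∧ g(e) = 1}`, and whose unilateral
inverses are `a^{I_e} = e·g(a)⁻¹` and `a^{J_e} = f(a)⁻¹·e`. -/
theorem averaging_pair_gdigroup {D : Type*} [Group D] (f g : D → D)
    (hf1 : ∀ a b : D, f a * f b = f (f a * b))
    (hf2 : ∀ a b : D, f a * f b = f (a * g b))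
    (hg1 : ∀ a b : D, g a * g b = g (a * g b))
    (hg2 : ∀ a b : D, g a * g b = g (f a * b))
    (vd dv : D → D → D)
    (hvd : ∀ a b : D, vd a b = f a * b)
    (hdv : ∀ a b : D, dv a b = a * g b) :
    ((∀ a b c : D, vd (vd a b) c = vd a (vd b c)) ∧
     (∀ a b c : D, dv (dv a b) c = dv a (dv b c)) ∧
     (∀ a b c : D, dv (vd a b) c = vd a (dv b c)) ∧
     (∀ a b c : D, dv a (vd b c) = dv a (dv b c)) ∧
     (∀ a b c : D, vd (vd a b) c = vd (dv a b) c)) ∧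
    ((∃ e : D, f e = 1 ∧ g e = 1) →
      ((∃ e : D, IsBarUnit vd dv e) ∧
       (∀ e : D, IsBarUnit vd dv e ↔ (f e = 1 ∧ g e = 1)) ∧
       (∀ e a : D, IsBarUnit vd dv e →
         (∀ x : D, dv x a = e ↔ x = e * (g a)⁻¹) ∧
         (∀ y : D, vd a y = e ↔ y = (f a)⁻¹ * e)))) := by
  obtain rfl : vd = fun a b => f a * b := funext₂ hvd
  obtain rfl : dv = fun a b => a * g b := funext₂ hdv
  obtain ⟨h₁, h₂, h₃, h₄, h₅⟩ := (IsAveragingPair.mk hf1 hf2 hg1 hg2).isDisemigroup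
  refine ⟨⟨h₁, h₂, h₃, h₄, h₅⟩, fun ⟨e, he⟩ => ⟨⟨e, (isBarUnit_mul_iff e).2 he⟩,
    isBarUnit_mul_iff, fun e a _ =>
      ⟨fun _ => eq_mul_inv_iff_mul_eq.symm, fun _ => eq_inv_mul_iff_mul_eq.symm⟩⟩⟩
end

section
/- Let (G,▷) be a shelf and let λ be a map assigning to each a ∈ G a bijective shelf endomorphism λ_a of (G,▷). Then λ is a twist if and only if λ_{λ_a^{-1}(b)}^{-1} λ_a^{-1} = λ_{λ_b^{-1}(b ▷ a)}^{-1} λ_b^{-1} holds for all a, b ∈ G. -/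
/-- Let `(G, ▷)` be a shelf (self-distributive operation `op`) and `lam`
a map assigning to each `a ∈ G` a bijective shelf endomorphism `lam a` of `(G, ▷)`.  Then
`lam` is a twist, i.e. `λ_a λ_b = λ_{λ_a(b)} λ_{λ_{λ_a(b)}⁻¹(λ_a(b) ▷ a)}` for all `a b`,
if and only if `λ_{λ_a⁻¹(b)}⁻¹ λ_a⁻¹ = λ_{λ_b⁻¹(b ▷ a)}⁻¹ λ_b⁻¹` for all `a b`. -/
theorem twist_iff_inverse_condition {G : Type*} (op : G → G → G)
    (hsd : ∀ a b c : G, op a (op b c) = op (op a b) (op a c))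
    (lam : G → Equiv.Perm G)
    (hend : ∀ a b c : G, lam a (op b c) = op (lam a b) (lam a c)) :
    (∀ a b : G, lam a * lam b =
        lam (lam a b) * lam ((lam (lam a b))⁻¹ (op (lam a b) a)))
    ↔ (∀ a b : G,
        (lam ((lam a)⁻¹ b))⁻¹ * (lam a)⁻¹ = (lam ((lam b)⁻¹ (op b a)))⁻¹ * (lam b)⁻¹) := by
  constructor
  · intro H a b
    have h := H a ((lam a)⁻¹ b)
    rw [show lam a ((lam a)⁻¹ b) = b from (lam a).apply_symm_apply b] at h
    have := congrArg (·⁻¹) h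
    simpa [mul_inv_rev] using this
  · intro H a b
    have h := H a (lam a b)
    rw [show (lam a)⁻¹ (lam a b) = b from (lam a).symm_apply_apply b] at h
    have := congrArg (·⁻¹) h
    simpa [mul_inv_rev] using this
end

section
/- Let (G,▷) be a shelf equipped with a twist λ, let (α,β) be a dynamical pair on G with coefficients in a set E, and let (G × E, ▷_α) be the dynamical extension of G via α. Then the map Λ assigning to each (a,s) ∈ G × E the map Λ_{(a,s)}(b,t) = (λ_a(b), β_{a,λ_a(b)}^{-1}(s,t)), where β_{a,c}^{-1}(s,−) denotes the inverse of the bijection β_{a,c}(s,−) : E → E, is a twist of the shelf (G × E, ▷_α). -/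
/-- Let `(G, ▷)` be a shelf equipped with a twist `lam` (each `lam a` is
a bijective shelf endomorphism and the twist identity holds), let `(α, β)` be a dynamical
pair on `G` with coefficients in a set `E` (writing `x · y := lam x ⁻¹ y`), and let
`(G × E, ▷_α)` be the dynamical extension, `(a,s) ▷_α (b,t) = (a ▷ b, α a b s t)`.  Then
the map `Λ` with `Λ (a,s) (b,t) = (lam a b, β_{a, lam a b}⁻¹(s, t))` (the inverse `βinv`
being taken in the second argument of `β`) is a twist of `(G × E, ▷_α)`: every `Λ p` is a
bijective shelf endomorphism of `▷_α` and the twist identity holds (with `Λinv` the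
inverse of `Λ`). -/
theorem dynamical_extension_twist {G E : Type*} (op : G → G → G)
    (hsd : ∀ a b c : G, op a (op b c) = op (op a b) (op a c))
    (lam : G → Equiv.Perm G)
    (hend : ∀ a b c : G, lam a (op b c) = op (lam a b) (lam a c))
    (htw : ∀ a b : G, lam a * lam b =
      lam (lam a b) * lam ((lam (lam a b))⁻¹ (op (lam a b) a)))
    (α β : G → G → E → E → E)
    (hβbij : ∀ (a b : G) (s : E), Function.Bijective (β a b s))
    (hdp1 : ∀ (a b c : G) (u s t : E),
      α a (op b c) u (α b c s t) = α (op a b) (op a c) (α a b u s) (α a c u t))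
    (hdp2 : ∀ (a b c : G) (u s t : E),
      α ((lam a)⁻¹ b) ((lam a)⁻¹ c) (β a b u s) (β a c u t) = β a (op b c) u (α b c s t))
    (hdp3 : ∀ (a b c : G) (u s t : E),
      β ((lam a)⁻¹ b) ((lam a)⁻¹ c) (β a b u s) (β a c u t) =
        β ((lam b)⁻¹ (op b a)) ((lam b)⁻¹ c) (β b (op b a) s (α b a s u)) (β b c s t))
    (βinv : G → G → E → E → E)
    (hβinv : ∀ (a b : G) (s t : E), βinv a b s (β a b s t) = t ∧ β a b s (βinv a b s t) = t)
    (opE : G × E → G × E → G × E)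
    (hopE : ∀ (a b : G) (s t : E), opE (a, s) (b, t) = (op a b, α a b s t))
    (Λ : G × E → G × E → G × E)
    (hΛ : ∀ (a b : G) (s t : E), Λ (a, s) (b, t) = (lam a b, βinv a (lam a b) s t)) :
    (∀ p : G × E, Function.Bijective (Λ p)) ∧
    (∀ p x y : G × E, Λ p (opE x y) = opE (Λ p x) (Λ p y)) ∧
    ∃ Λinv : G × E → G × E → G × E,
      (∀ p q : G × E, Λinv p (Λ p q) = q ∧ Λ p (Λinv p q) = q) ∧
      (∀ p q x : G × E, Λ p (Λ q x) = Λ (Λ p q) (Λ (Λinv (Λ p q) (opE (Λ p q) p)) x)) := by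
  have hβ1 : ∀ (a b : G) (s t : E), βinv a b s (β a b s t) = t := fun a b s t => (hβinv a b s t).1
  have hβ2 : ∀ (a b : G) (s t : E), β a b s (βinv a b s t) = t := fun a b s t => (hβinv a b s t).2
  set Λinv : G × E → G × E → G × E :=
    fun p q => ((lam p.1)⁻¹ q.1, β p.1 q.1 p.2 q.2) with hΛinvdef
  have hLi : ∀ p q : G × E, Λinv p (Λ p q) = q := by
    rintro ⟨a, s⟩ ⟨b, t⟩
    simp [hΛinvdef, hΛ, hβ2]
  have hIL : ∀ p q : G × E, Λ p (Λinv p q) = q := by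
    rintro ⟨a, s⟩ ⟨c, u⟩
    simp only [hΛinvdef, hΛ, (fun (f : Equiv.Perm G) (x : G) => (show f (f⁻¹ x) = x from f.apply_symm_apply x))]
    exact Prod.ext rfl (hβ1 a c s u)
  refine ⟨fun p => Function.bijective_iff_has_inverse.mpr ⟨Λinv p, hLi p, hIL p⟩, ?_,
    Λinv, fun p q => ⟨hLi p q, hIL p q⟩, ?_⟩
  · rintro ⟨a, s⟩ ⟨b, t⟩ ⟨c, u⟩
    rw [hopE, hΛ, hΛ, hΛ, hopE, hend]
    refine Prod.ext rfl ?_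
    apply (hβbij a (op (lam a b) (lam a c)) s).1
    rw [hβ2]
    have h2 := hdp2 a (lam a b) (lam a c) s (βinv a (lam a b) s t) (βinv a (lam a c) s u)
    rw [(fun (f : Equiv.Perm G) (x : G) => (show f⁻¹ (f x) = x from f.symm_apply_apply x)), (fun (f : Equiv.Perm G) (x : G) => (show f⁻¹ (f x) = x from f.symm_apply_apply x)), hβ2, hβ2] at h2
    exact h2
  · rintro ⟨a, s⟩ ⟨b, t⟩ ⟨c, u⟩
    rw [hΛ b c, hΛ a (lam b c), hΛ a b, hopE, hΛinvdef]
    simp only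
    rw [hΛ, hΛ]
    have hc : lam a (lam b c) =
        lam (lam a b) (lam ((lam (lam a b))⁻¹ (op (lam a b) a)) c) := by
      have := congrArg (fun f : Equiv.Perm G => f c) (htw a b)
      simpa [Equiv.Perm.mul_apply] using this
    refine Prod.ext hc ?_
    simp only
    have key := hdp3 a (lam a b) (lam a (lam b c)) s (βinv a (lam a b) s t)
      (βinv a (lam a (lam b c)) s (βinv b (lam b c) t u))
    rw [(fun (f : Equiv.Perm G) (x : G) => (show f⁻¹ (f x) = x from f.symm_apply_apply x)), (fun (f : Equiv.Perm G) (x : G) => (show f⁻¹ (f x) = x from f.symm_apply_apply x)), hβ2, hβ2, hβ2] at key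
    rw [hc] at key ⊢
    rw [(fun (f : Equiv.Perm G) (x : G) => (show f⁻¹ (f x) = x from f.symm_apply_apply x))] at key
    conv_rhs => rw [key]
    rw [hβ1, hβ1]
end

section
/- Let (G,▷) be a shelf equipped with a twist λ, let E be a set, let ψ be an action of (G,▷) on E, and let σ : G → Sym(E) be a map. Define Λ_{(a,u)} : G × E → G × E by Λ_{(a,u)}(b,v) = (λ_a(b), σ_a(v)) for all (a,u), (b,v) ∈ G × E. Then Λ is a twist of the hemi-semidirect product shelf (G × E, ▷_ψ) if and only if σ_a σ_b = σ_{λ_a(b)} σ_{ρ_b(a)} and σ_a ψ_b = ψ_{λ_a(b)} σ_a hold for all a, b ∈ G, where ρ_b(a) = λ_{λ_a(b)}^{-1}(λ_a(b) ▷ a), i.e. if and only if (ψ,σ) is a hemi-semidirect pair of λ with coefficients in E. -/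
/-- Let `(G, ▷)` be a shelf equipped with a twist `lam`, let `psi` be an
action of `(G, ▷)` on a set `E` (so `ψ_{a ▷ b} ψ_a = ψ_a ψ_b`), let `sigma : G → Sym(E)`
be a map, and let `(G × E, ▷_ψ)` be the hemi-semidirect product shelf
`(a,u) ▷_ψ (b,v) = (a ▷ b, ψ_a(v))`.  Define `Λ_{(a,u)}(b,v) = (λ_a(b), σ_a(v))`.  Then
`Λ` is a twist of `(G × E, ▷_ψ)` (each `Λ p` is a shelf endomorphism and the twist
identity holds) if and only if `σ_a σ_b = σ_{λ_a(b)} σ_{ρ_b(a)}` and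
`σ_a ψ_b = ψ_{λ_a(b)} σ_a` for all `a b`, where `ρ_b(a) = λ_{λ_a(b)}⁻¹(λ_a(b) ▷ a)` —
that is, iff `(ψ, σ)` is a hemi-semidirect pair of `λ` with coefficients in `E`. -/
theorem hemiSemidirect_twist_iff {G E : Type*} (op : G → G → G)
    (hsd : ∀ a b c : G, op a (op b c) = op (op a b) (op a c))
    (lam : G → Equiv.Perm G)
    (hend : ∀ a b c : G, lam a (op b c) = op (lam a b) (lam a c))
    (htw : ∀ a b : G, lam a * lam b =
      lam (lam a b) * lam ((lam (lam a b))⁻¹ (op (lam a b) a)))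
    (psi : G → Equiv.Perm E)
    (hpsi : ∀ a b : G, psi (op a b) * psi a = psi a * psi b)
    (sigma : G → Equiv.Perm E)
    (opE : G × E → G × E → G × E)
    (hopE : ∀ (a b : G) (u v : E), opE (a, u) (b, v) = (op a b, psi a v))
    (Lam : G × E → Equiv.Perm (G × E))
    (hLam : ∀ (a b : G) (u v : E), Lam (a, u) (b, v) = (lam a b, sigma a v)) :
    ((∀ p x y : G × E, Lam p (opE x y) = opE (Lam p x) (Lam p y)) ∧
     (∀ p q : G × E, Lam p * Lam q =
        Lam (Lam p q) * Lam ((Lam (Lam p q))⁻¹ (opE (Lam p q) p))))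
    ↔
    ((∀ a b : G, sigma a * sigma b =
        sigma (lam a b) * sigma ((lam (lam a b))⁻¹ (op (lam a b) a))) ∧
     (∀ a b : G, sigma a * psi b = psi (lam a b) * sigma a)) := by
  have hinv : ∀ (a : G) (u : E) (b : G) (v : E),
      (Lam (a, u))⁻¹ (b, v) = ((lam a)⁻¹ b, (sigma a)⁻¹ v) := by
    intro a u b v
    apply (Lam (a, u)).injective
    rw [← Equiv.Perm.mul_apply, mul_inv_cancel, Equiv.Perm.one_apply, hLam]
    simp
  constructor
  · rintro ⟨h1, h2⟩
    constructor
    · intro a b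
      ext w
      have := h2 (a, w) (b, w)
      rw [Equiv.ext_iff] at this
      have h := this (a, w)
      simp only [Equiv.Perm.mul_apply, hLam, hopE, hinv] at h
      exact congrArg Prod.snd h
    · intro a b
      ext w
      have h := h1 (a, w) (b, w) (b, w)
      simp only [hLam, hopE] at h
      exact congrArg Prod.snd h
  · rintro ⟨h1, h2⟩
    constructor
    · rintro ⟨a, u⟩ ⟨b, v⟩ ⟨c, w⟩
      simp only [hLam, hopE]
      have hs := congrFun (congrArg DFunLike.coe (h2 a b)) w
      simp only [Equiv.Perm.mul_apply] at hs
      exact Prod.ext (hend a b c) hs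
    · rintro ⟨a, u⟩ ⟨b, v⟩
      apply Equiv.ext
      rintro ⟨c, w⟩
      simp only [Equiv.Perm.mul_apply, hLam, hopE, hinv]
      have hl := congrFun (congrArg DFunLike.coe (htw a b)) c
      have hs := congrFun (congrArg DFunLike.coe (h1 a b)) w
      simp only [Equiv.Perm.mul_apply] at hl hs
      exact Prod.ext hl hs
end
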